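/- An impartial game Γ is SG decreasing if and only if its Sprague–Grundy function coincides with its Tetris function, i.e., 𝓖_Γ(x) = 𝓣_Γ(x) for every position x. -/
import Mathlib


/-- The minimum excludant of a set of natural numbers. -/
noncomputable def mex (S : Set ℕ) : ℕ := sInf {n : ℕ | n ∉ S}

open Classical in
/-- The Sprague–Grundy function of the impartial game with move relation `move`
(meaningful when every play is finite, i.e. the reversed move relation is
well-founded): it satisfies `sgFun move x = mex {sgFun move y | move x y}`. -/
noncomputable def sgFun {X : Type*} (move : X → X → Prop) : X → ℕ :=
  if hwf : WellFounded (fun y x => move x y) then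
    hwf.fix (fun x ih => mex {v : ℕ | ∃ (y : X) (h : move x y), ih y h = v})
  else fun _ => 0

open Classical in
/-- The Tetris function: the length of a longest play starting at `x`
(meaningful when every play is finite and the game is finitely branching):
it satisfies `tetrisFun move x = sup {tetrisFun move y + 1 | move x y}`. -/
noncomputable def tetrisFun {X : Type*} (move : X → X → Prop) : X → ℕ :=
  if hwf : WellFounded (fun y x => move x y) then
    hwf.fix (fun x ih => sSup {v : ℕ | ∃ (y : X) (h : move x y), v = ih y h + 1})
  else fun _ => 0

/-- A game is SG decreasing if every move strictly decreases the SG value. -/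
def SGDecreasing {X : Type*} (move : X → X → Prop) : Prop :=
  ∀ x y, move x y → sgFun move y < sgFun move x

/-- The move relation of the game `NIM_𝓗` on positions `ℕ^V`. -/
def nimMove {V : Type*} (𝓗 : Set (Finset V)) (x x' : V → ℕ) : Prop :=
  ∃ H ∈ 𝓗, (∀ i ∈ H, x' i < x i) ∧ ∀ i ∉ H, x' i = x i

/-- A hypergraph is Tetris if `NIM_𝓗` is SG decreasing. -/
def IsTetrisHypergraph {V : Type*} (𝓗 : Set (Finset V)) : Prop :=
  SGDecreasing (nimMove 𝓗)

/-- The move relation of the `𝓗`-combination of the games `move i`. -/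
def combMove {V : Type*} {X : V → Type*} (𝓗 : Set (Finset V))
    (move : ∀ i, X i → X i → Prop) (x x' : ∀ i, X i) : Prop :=
  ∃ H ∈ 𝓗, (∀ i ∈ H, move i (x i) (x' i)) ∧ ∀ i ∉ H, x' i = x i

/-- Condition (*): every nonempty induced subhypergraph has a hyperedge
intersecting all its hyperedges. -/
def CondStar {V : Type*} [DecidableEq V] (𝓗 : Set (Finset V)) : Prop :=
  ∀ S : Finset V, (∃ H ∈ 𝓗, H ⊆ S) →
    ∃ H ∈ 𝓗, H ⊆ S ∧ ∀ H' ∈ 𝓗, H' ⊆ S → (H ∩ H').Nonempty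

lemma sgFun_eq' {X : Type*} (move : X → X → Prop)
    (hwf : WellFounded (fun y x => move x y)) (x : X) :
    sgFun move x = mex {v : ℕ | ∃ y, move x y ∧ sgFun move y = v} := by
  have h : sgFun move = hwf.fix (fun x ih => mex {v : ℕ | ∃ (y : X) (h : move x y), ih y h = v}) := by
    simp only [sgFun, dif_pos hwf]
  conv_lhs => rw [h, WellFounded.fix_eq]
  congr 1
  ext v
  simp only [Set.mem_setOf_eq, h, exists_prop]

lemma tetrisFun_eq' {X : Type*} (move : X → X → Prop)
    (hwf : WellFounded (fun y x => move x y)) (x : X) :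
    tetrisFun move x = sSup {v : ℕ | ∃ y, move x y ∧ v = tetrisFun move y + 1} := by
  have h : tetrisFun move = hwf.fix (fun x ih => sSup {v : ℕ | ∃ (y : X) (h : move x y), v = ih y h + 1}) := by
    simp only [tetrisFun, dif_pos hwf]
  conv_lhs => rw [h, WellFounded.fix_eq]
  congr 1
  ext v
  simp only [Set.mem_setOf_eq, h, exists_prop]

lemma mem_of_lt_mex' {S : Set ℕ} {n : ℕ} (h : n < mex S) : n ∈ S := by
  by_contra hn
  exact absurd (Nat.sInf_le hn) (not_le.mpr h)

theorem stmt14 {X : Type*} (move : X → X → Prop)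
    (hwf : WellFounded (fun y x => move x y))
    (hfin : ∀ x, {y | move x y}.Finite) :
    SGDecreasing move ↔ ∀ x : X, sgFun move x = tetrisFun move x := by
  constructor
  · intro hsg x
    refine hwf.induction (C := fun x => sgFun move x = tetrisFun move x) x ?_
    intro x ih
    set S : Set ℕ := {v : ℕ | ∃ y, move x y ∧ sgFun move y = v} with hS
    have hGx : sgFun move x = mex S := sgFun_eq' move hwf x
    have hSIio : S = Set.Iio (sgFun move x) := by
      ext v
      constructor
      · rintro ⟨y, hy, rfl⟩
        exact hsg x y hy
      · intro hv
        rw [hGx] at hv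
        exact mem_of_lt_mex' hv
    have hT : {v : ℕ | ∃ y, move x y ∧ v = tetrisFun move y + 1}
        = Set.Icc 1 (sgFun move x) := by
      ext v
      simp only [Set.mem_setOf_eq, Set.mem_Icc]
      constructor
      · rintro ⟨y, hy, rfl⟩
        have hv : sgFun move y ∈ S := ⟨y, hy, rfl⟩
        rw [hSIio] at hv
        rw [← ih y hy]
        exact ⟨Nat.succ_le_succ (Nat.zero_le _), hv⟩
      · rintro ⟨h1, h2⟩
        have hv : v - 1 ∈ S := by
          rw [hSIio]
          exact lt_of_lt_of_le (Nat.sub_lt h1 one_pos) h2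
        obtain ⟨y, hy, hyv⟩ := hv
        exact ⟨y, hy, by rw [← ih y hy]; omega⟩
    rw [tetrisFun_eq' move hwf x, hT]
    rcases Nat.eq_zero_or_pos (sgFun move x) with h0 | h1
    · rw [h0]
      simp [Set.Icc_eq_empty_of_lt]
    · rw [csSup_Icc h1]
  · intro h x y hxy
    rw [h x, h y]
    have hTfin : {v : ℕ | ∃ z, move x z ∧ v = tetrisFun move z + 1}.Finite := by
      refine (((hfin x).image (fun z => tetrisFun move z + 1))).subset ?_
      rintro v ⟨z, hz, rfl⟩
      exact ⟨z, hz, rfl⟩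
    have hmem : tetrisFun move y + 1 ∈ {v : ℕ | ∃ z, move x z ∧ v = tetrisFun move z + 1} :=
      ⟨y, hxy, rfl⟩
    have := le_csSup hTfin.bddAbove hmem
    rw [tetrisFun_eq' move hwf x]
    omega
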